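/- arXiv:2509.12640 — 4 statements merged into one kernel-verified Lean document; each statement's English description precedes it below -/
import Mathlib

section
/- The graph F_11 on 5 vertices v_1,...,v_5 with edges v_1v_2, v_1v_3, v_1v_4, v_1v_5, v_2v_5, v_4v_5, v_3v_4 has second largest distance eigenvalue equal to (√5-3)/2 ≈ -0.3820, which is greater than -1/2. -/
open Polynomial

/-- Distance matrix of a graph. -/
noncomputable def distMatrix {V : Type*} [Fintype V] (G : SimpleGraph V) :
    Matrix V V ℝ := fun i j => (G.dist i j : ℝ)

/-- The graph `F₁₁` on 5 vertices with edges `v₁v₂, v₁v₃, v₁v₄, v₁v₅, v₂v₅, v₄v₅, v₃v₄`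
(0-based: `01,02,03,04,14,34,23`). -/
def F11 : SimpleGraph (Fin 5) :=
  SimpleGraph.fromRel (fun a b =>
    (a, b) ∈ [((0 : Fin 5), (1 : Fin 5)), (0, 2), (0, 3), (0, 4), (1, 4), (3, 4), (2, 3)])

lemma dist_eq_two' {V : Type*} {G : SimpleGraph V} {i j : V} (hne : i ≠ j)
    (hadj : ¬ G.Adj i j) (k : V) (h1 : G.Adj i k) (h2 : G.Adj k j) : G.dist i j = 2 := by
  have hle : G.dist i j ≤ 2 := by
    simpa using SimpleGraph.dist_le (SimpleGraph.Walk.cons h1 (SimpleGraph.Walk.cons h2 SimpleGraph.Walk.nil))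
  have h0 : G.dist i j ≠ 0 := by
    rw [SimpleGraph.dist_ne_zero_iff_ne_and_reachable]
    exact ⟨hne, ⟨SimpleGraph.Walk.cons h1 (SimpleGraph.Walk.cons h2 SimpleGraph.Walk.nil)⟩⟩
  have h1' : G.dist i j ≠ 1 := fun h => hadj (SimpleGraph.dist_eq_one_iff_adj.mp h)
  omega

lemma distM : distMatrix F11 =
    !![0,1,1,1,1; 1,0,2,2,1; 1,2,0,1,2; 1,2,1,0,1; 1,1,2,1,0] := by
  ext i j
  fin_cases i <;> fin_cases j <;> simp only [distMatrix]
  · have h : F11.dist (0 : Fin 5) (0 : Fin 5) = 0 := SimpleGraph.dist_self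
    show ((F11.dist (0:Fin 5) (0:Fin 5) : ℕ) : ℝ) = (0:ℝ)
    rw [h]; norm_num
  · have h : F11.dist (0 : Fin 5) (1 : Fin 5) = 1 := SimpleGraph.dist_eq_one_iff_adj.mpr (by simp [F11, SimpleGraph.fromRel_adj])
    show ((F11.dist (0:Fin 5) (1:Fin 5) : ℕ) : ℝ) = (1:ℝ)
    rw [h]; norm_num
  · have h : F11.dist (0 : Fin 5) (2 : Fin 5) = 1 := SimpleGraph.dist_eq_one_iff_adj.mpr (by simp [F11, SimpleGraph.fromRel_adj])
    show ((F11.dist (0:Fin 5) (2:Fin 5) : ℕ) : ℝ) = (1:ℝ)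
    rw [h]; norm_num
  · have h : F11.dist (0 : Fin 5) (3 : Fin 5) = 1 := SimpleGraph.dist_eq_one_iff_adj.mpr (by simp [F11, SimpleGraph.fromRel_adj])
    show ((F11.dist (0:Fin 5) (3:Fin 5) : ℕ) : ℝ) = (1:ℝ)
    rw [h]; norm_num
  · have h : F11.dist (0 : Fin 5) (4 : Fin 5) = 1 := SimpleGraph.dist_eq_one_iff_adj.mpr (by simp [F11, SimpleGraph.fromRel_adj])
    show ((F11.dist (0:Fin 5) (4:Fin 5) : ℕ) : ℝ) = (1:ℝ)
    rw [h]; norm_num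
  · have h : F11.dist (1 : Fin 5) (0 : Fin 5) = 1 := SimpleGraph.dist_eq_one_iff_adj.mpr (by simp [F11, SimpleGraph.fromRel_adj])
    show ((F11.dist (1:Fin 5) (0:Fin 5) : ℕ) : ℝ) = (1:ℝ)
    rw [h]; norm_num
  · have h : F11.dist (1 : Fin 5) (1 : Fin 5) = 0 := SimpleGraph.dist_self
    show ((F11.dist (1:Fin 5) (1:Fin 5) : ℕ) : ℝ) = (0:ℝ)
    rw [h]; norm_num
  · have h : F11.dist (1 : Fin 5) (2 : Fin 5) = 2 := dist_eq_two' (by decide) (by simp [F11, SimpleGraph.fromRel_adj]) 0 (by simp [F11, SimpleGraph.fromRel_adj]) (by simp [F11, SimpleGraph.fromRel_adj])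
    show ((F11.dist (1:Fin 5) (2:Fin 5) : ℕ) : ℝ) = (2:ℝ)
    rw [h]; norm_num
  · have h : F11.dist (1 : Fin 5) (3 : Fin 5) = 2 := dist_eq_two' (by decide) (by simp [F11, SimpleGraph.fromRel_adj]) 0 (by simp [F11, SimpleGraph.fromRel_adj]) (by simp [F11, SimpleGraph.fromRel_adj])
    show ((F11.dist (1:Fin 5) (3:Fin 5) : ℕ) : ℝ) = (2:ℝ)
    rw [h]; norm_num
  · have h : F11.dist (1 : Fin 5) (4 : Fin 5) = 1 := SimpleGraph.dist_eq_one_iff_adj.mpr (by simp [F11, SimpleGraph.fromRel_adj])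
    show ((F11.dist (1:Fin 5) (4:Fin 5) : ℕ) : ℝ) = (1:ℝ)
    rw [h]; norm_num
  · have h : F11.dist (2 : Fin 5) (0 : Fin 5) = 1 := SimpleGraph.dist_eq_one_iff_adj.mpr (by simp [F11, SimpleGraph.fromRel_adj])
    show ((F11.dist (2:Fin 5) (0:Fin 5) : ℕ) : ℝ) = (1:ℝ)
    rw [h]; norm_num
  · have h : F11.dist (2 : Fin 5) (1 : Fin 5) = 2 := dist_eq_two' (by decide) (by simp [F11, SimpleGraph.fromRel_adj]) 0 (by simp [F11, SimpleGraph.fromRel_adj]) (by simp [F11, SimpleGraph.fromRel_adj])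
    show ((F11.dist (2:Fin 5) (1:Fin 5) : ℕ) : ℝ) = (2:ℝ)
    rw [h]; norm_num
  · have h : F11.dist (2 : Fin 5) (2 : Fin 5) = 0 := SimpleGraph.dist_self
    show ((F11.dist (2:Fin 5) (2:Fin 5) : ℕ) : ℝ) = (0:ℝ)
    rw [h]; norm_num
  · have h : F11.dist (2 : Fin 5) (3 : Fin 5) = 1 := SimpleGraph.dist_eq_one_iff_adj.mpr (by simp [F11, SimpleGraph.fromRel_adj])
    show ((F11.dist (2:Fin 5) (3:Fin 5) : ℕ) : ℝ) = (1:ℝ)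
    rw [h]; norm_num
  · have h : F11.dist (2 : Fin 5) (4 : Fin 5) = 2 := dist_eq_two' (by decide) (by simp [F11, SimpleGraph.fromRel_adj]) 0 (by simp [F11, SimpleGraph.fromRel_adj]) (by simp [F11, SimpleGraph.fromRel_adj])
    show ((F11.dist (2:Fin 5) (4:Fin 5) : ℕ) : ℝ) = (2:ℝ)
    rw [h]; norm_num
  · have h : F11.dist (3 : Fin 5) (0 : Fin 5) = 1 := SimpleGraph.dist_eq_one_iff_adj.mpr (by simp [F11, SimpleGraph.fromRel_adj])
    show ((F11.dist (3:Fin 5) (0:Fin 5) : ℕ) : ℝ) = (1:ℝ)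
    rw [h]; norm_num
  · have h : F11.dist (3 : Fin 5) (1 : Fin 5) = 2 := dist_eq_two' (by decide) (by simp [F11, SimpleGraph.fromRel_adj]) 0 (by simp [F11, SimpleGraph.fromRel_adj]) (by simp [F11, SimpleGraph.fromRel_adj])
    show ((F11.dist (3:Fin 5) (1:Fin 5) : ℕ) : ℝ) = (2:ℝ)
    rw [h]; norm_num
  · have h : F11.dist (3 : Fin 5) (2 : Fin 5) = 1 := SimpleGraph.dist_eq_one_iff_adj.mpr (by simp [F11, SimpleGraph.fromRel_adj])
    show ((F11.dist (3:Fin 5) (2:Fin 5) : ℕ) : ℝ) = (1:ℝ)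
    rw [h]; norm_num
  · have h : F11.dist (3 : Fin 5) (3 : Fin 5) = 0 := SimpleGraph.dist_self
    show ((F11.dist (3:Fin 5) (3:Fin 5) : ℕ) : ℝ) = (0:ℝ)
    rw [h]; norm_num
  · have h : F11.dist (3 : Fin 5) (4 : Fin 5) = 1 := SimpleGraph.dist_eq_one_iff_adj.mpr (by simp [F11, SimpleGraph.fromRel_adj])
    show ((F11.dist (3:Fin 5) (4:Fin 5) : ℕ) : ℝ) = (1:ℝ)
    rw [h]; norm_num
  · have h : F11.dist (4 : Fin 5) (0 : Fin 5) = 1 := SimpleGraph.dist_eq_one_iff_adj.mpr (by simp [F11, SimpleGraph.fromRel_adj])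
    show ((F11.dist (4:Fin 5) (0:Fin 5) : ℕ) : ℝ) = (1:ℝ)
    rw [h]; norm_num
  · have h : F11.dist (4 : Fin 5) (1 : Fin 5) = 1 := SimpleGraph.dist_eq_one_iff_adj.mpr (by simp [F11, SimpleGraph.fromRel_adj])
    show ((F11.dist (4:Fin 5) (1:Fin 5) : ℕ) : ℝ) = (1:ℝ)
    rw [h]; norm_num
  · have h : F11.dist (4 : Fin 5) (2 : Fin 5) = 2 := dist_eq_two' (by decide) (by simp [F11, SimpleGraph.fromRel_adj]) 0 (by simp [F11, SimpleGraph.fromRel_adj]) (by simp [F11, SimpleGraph.fromRel_adj])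
    show ((F11.dist (4:Fin 5) (2:Fin 5) : ℕ) : ℝ) = (2:ℝ)
    rw [h]; norm_num
  · have h : F11.dist (4 : Fin 5) (3 : Fin 5) = 1 := SimpleGraph.dist_eq_one_iff_adj.mpr (by simp [F11, SimpleGraph.fromRel_adj])
    show ((F11.dist (4:Fin 5) (3:Fin 5) : ℕ) : ℝ) = (1:ℝ)
    rw [h]; norm_num
  · have h : F11.dist (4 : Fin 5) (4 : Fin 5) = 0 := SimpleGraph.dist_self
    show ((F11.dist (4:Fin 5) (4:Fin 5) : ℕ) : ℝ) = (0:ℝ)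
    rw [h]; norm_num

set_option maxHeartbeats 4000000 in
set_option maxRecDepth 100000 in
lemma detN : (!![X, -1, -1, -1, -1;
                 -1, X, -2, -2, -1;
                 -1, -2, X, -1, -2;
                 -1, -2, -1, X, -1;
                 -1, -1, -2, -1, X] : Matrix (Fin 5) (Fin 5) ℝ[X]).det
    = X^5 - 19*X^3 - 42*X^2 - 29*X - 6 := by
  simp [Matrix.det_succ_row_zero, Fin.sum_univ_succ, Fin.succAbove]
  ring

lemma charmatrixM :
    Matrix.charmatrix (!![(0:ℝ),1,1,1,1; 1,0,2,2,1; 1,2,0,1,2; 1,2,1,0,1; 1,1,2,1,0]) =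
    !![X, -1, -1, -1, -1;
       -1, X, -2, -2, -1;
       -1, -2, X, -1, -2;
       -1, -2, -1, X, -1;
       -1, -1, -2, -1, X] := by
  refine Matrix.ext fun i j => ?_
  fin_cases i <;> fin_cases j <;>
    simp (config := {decide := true}) [Matrix.charmatrix_apply, Matrix.diagonal,
      Matrix.vecHead, Matrix.vecTail, Function.comp, Fin.ext_iff, map_ofNat] <;> ring

lemma charM : (distMatrix F11).charpoly = X^5 - 19*X^3 - 42*X^2 - 29*X - 6 := by
  rw [distM, Matrix.charpoly, charmatrixM, detN]

set_option maxHeartbeats 1600000 in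
set_option maxRecDepth 100000 in
/-- The second largest distance eigenvalue of `F₁₁` equals `(√5 - 3)/2`, which is
greater than `-1/2`. -/
theorem stmt10 (μ : Fin 5 → ℝ) (hμ : Antitone μ)
    (hchar : (distMatrix F11).charpoly = ∏ i, (X - C (μ i))) :
    μ 1 = (Real.sqrt 5 - 3) / 2 ∧ -1/2 < μ 1 := by
  set s := Real.sqrt 5 with hs
  have hs2 : s ^ 2 = 5 := Real.sq_sqrt (by norm_num)
  have hs0 : 0 ≤ s := Real.sqrt_nonneg 5
  have hslb : 2.236 < s := by nlinarith
  have hsub : s < 2.2361 := by nlinarith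
  set a := (s - 3) / 2 with ha
  have halb : -1/2 < a := by rw [ha]; linarith
  have haub : a < 0 := by rw [ha]; linarith
  have hprod : (∏ i, (X - C (μ i))) = (X^5 - 19*X^3 - 42*X^2 - 29*X - 6 : ℝ[X]) :=
    hchar.symm.trans charM
  have heval : ∀ x : ℝ, (x - μ 0)*(x - μ 1)*(x - μ 2)*(x - μ 3)*(x - μ 4)
      = x^5 - 19*x^3 - 42*x^2 - 29*x - 6 := by
    intro x
    have h := congrArg (Polynomial.eval x) hprod
    simpa [Fin.prod_univ_five] using h
  -- every eigenvalue is a root of the factored polynomial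
  have hroot : ∀ i : Fin 5,
      (μ i ^ 2 + 3 * μ i + 1) * (μ i ^ 3 - 3 * μ i ^ 2 - 11 * μ i - 6) = 0 := by
    have r0 : (μ 0 ^ 2 + 3 * μ 0 + 1) * (μ 0 ^ 3 - 3 * μ 0 ^ 2 - 11 * μ 0 - 6) = 0 := by
      linear_combination (-1 : ℝ) * heval (μ 0)
    have r1 : (μ 1 ^ 2 + 3 * μ 1 + 1) * (μ 1 ^ 3 - 3 * μ 1 ^ 2 - 11 * μ 1 - 6) = 0 := by
      linear_combination (-1 : ℝ) * heval (μ 1)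
    have r2 : (μ 2 ^ 2 + 3 * μ 2 + 1) * (μ 2 ^ 3 - 3 * μ 2 ^ 2 - 11 * μ 2 - 6) = 0 := by
      linear_combination (-1 : ℝ) * heval (μ 2)
    have r3 : (μ 3 ^ 2 + 3 * μ 3 + 1) * (μ 3 ^ 3 - 3 * μ 3 ^ 2 - 11 * μ 3 - 6) = 0 := by
      linear_combination (-1 : ℝ) * heval (μ 3)
    have r4 : (μ 4 ^ 2 + 3 * μ 4 + 1) * (μ 4 ^ 3 - 3 * μ 4 ^ 2 - 11 * μ 4 - 6) = 0 := by
      linear_combination (-1 : ℝ) * heval (μ 4)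
    intro i
    fin_cases i
    exacts [r0, r1, r2, r3, r4]
  have hcases : ∀ i : Fin 5,
      μ i = a ∨ (-2.62 < μ i ∧ μ i ≤ -1/2) ∨ (5 < μ i ∧ μ i < 6) := by
    intro i
    rcases mul_eq_zero.mp (hroot i) with hq | hc
    · -- quadratic
      have h2 : (2 * μ i + 3 - s) * (2 * μ i + 3 + s) = 0 := by
        linear_combination 4 * hq - hs2
      rcases mul_eq_zero.mp h2 with h | h
      · left; rw [ha]; linarith
      · right; left; constructor <;> nlinarith
    · -- cubic
      rcases le_or_gt (μ i) (-2.62) with h1 | h1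
      · exfalso; nlinarith [sq_nonneg (μ i + 2.62), sq_nonneg (μ i)]
      rcases le_or_gt (μ i) (-1/2) with h2 | h2
      · right; left; exact ⟨h1, h2⟩
      rcases le_or_gt (μ i) 5 with h3 | h3
      · exfalso; nlinarith [sq_nonneg (μ i + 1/2), sq_nonneg (μ i - 5), sq_nonneg (μ i - 3),
          mul_nonneg (by linarith : (0:ℝ) ≤ μ i + 1/2) (by linarith : (0:ℝ) ≤ 5 - μ i)]
      rcases le_or_gt 6 (μ i) with h4 | h4
      · exfalso; nlinarith [sq_nonneg (μ i - 6)]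
      · right; right; exact ⟨h3, h4⟩
  -- all eigenvalues less than 6, greater than -2.62
  have hub : ∀ i : Fin 5, μ i < 6 := by
    intro i; rcases hcases i with h | h | h
    · rw [h]; linarith
    · linarith [h.2]
    · exact h.2
  have hlb : ∀ i : Fin 5, -2.62 < μ i := by
    intro i; rcases hcases i with h | h | h
    · rw [h]; linarith
    · exact h.1
    · linarith [h.1]
  -- the largest eigenvalue exceeds 5
  have h0big : 5 < μ 0 := by
    by_contra hcon
    push_neg at hcon
    have hle : ∀ i : Fin 5, μ i ≤ a := by
      intro i
      rcases hcases i with h | h | h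
      · rw [h]
      · linarith [h.2]
      · exact absurd (lt_of_lt_of_le h.1 (le_trans (hμ (Fin.zero_le i)) hcon)) (lt_irrefl 5)
    have p0 : (0:ℝ) < 5 - μ 0 := by have := hle 0; linarith
    have p1 : (0:ℝ) < 5 - μ 1 := by have := hle 1; linarith
    have p2 : (0:ℝ) < 5 - μ 2 := by have := hle 2; linarith
    have p3 : (0:ℝ) < 5 - μ 3 := by have := hle 3; linarith
    have p4 : (0:ℝ) < 5 - μ 4 := by have := hle 4; linarith
    have hp := mul_pos (mul_pos (mul_pos (mul_pos p0 p1) p2) p3) p4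
    have he := heval 5
    nlinarith [hp, he]
  -- the second eigenvalue exceeds -1/2
  have h1big : -1/2 < μ 1 := by
    by_contra hcon
    push_neg at hcon
    have hle : ∀ i : Fin 5, 1 ≤ i → (0:ℝ) ≤ -1/2 - μ i := by
      intro i hi
      have := hμ hi
      linarith
    have n1 := hle 1 (le_refl _)
    have n2 := hle 2 (by decide)
    have n3 := hle 3 (by decide)
    have n4 := hle 4 (by decide)
    have hx : -1/2 - μ 0 < 0 := by linarith
    have hP4 : (0:ℝ) ≤ (-1/2 - μ 1) * (-1/2 - μ 2) * (-1/2 - μ 3) * (-1/2 - μ 4) :=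
      mul_nonneg (mul_nonneg (mul_nonneg n1 n2) n3) n4
    have he := heval (-1/2)
    have hne : (-1/2 - μ 0) * ((-1/2 - μ 1) * (-1/2 - μ 2) * (-1/2 - μ 3) * (-1/2 - μ 4)) ≤ 0 :=
      mul_nonpos_of_nonpos_of_nonneg (le_of_lt hx) hP4
    have he' : (-1/2 - μ 0) * ((-1/2 - μ 1) * (-1/2 - μ 2) * (-1/2 - μ 3) * (-1/2 - μ 4))
        = 11/32 := by linear_combination he
    linarith
  -- conclude
  have h1eq : μ 1 = a := by
    rcases hcases 1 with h | h | h
    · exact h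
    · exact absurd h1big (by linarith [h.2])
    · -- impossible: two eigenvalues in (5,6)
      exfalso
      have h0c : 5 < μ 0 ∧ μ 0 < 6 := ⟨h0big, hub 0⟩
      have u0a : -1 < 5 - μ 0 := by linarith [h0c.2]
      have u0b : 5 - μ 0 < 0 := by linarith [h0c.1]
      have u1a : -1 < 5 - μ 1 := by linarith [h.2]
      have u1b : 5 - μ 1 < 0 := by linarith [h.1]
      have b2 : |5 - μ 2| < 7.62 := abs_lt.mpr ⟨by linarith [hub 2], by linarith [hlb 2]⟩
      have b3 : |5 - μ 3| < 7.62 := abs_lt.mpr ⟨by linarith [hub 3], by linarith [hlb 3]⟩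
      have b4 : |5 - μ 4| < 7.62 := abs_lt.mpr ⟨by linarith [hub 4], by linarith [hlb 4]⟩
      have b0 : |5 - μ 0| < 1 := abs_lt.mpr ⟨by linarith, by linarith⟩
      have b1 : |5 - μ 1| < 1 := abs_lt.mpr ⟨by linarith, by linarith⟩
      have A1 : |5 - μ 0| * |5 - μ 1| < 1 := by
        nlinarith [abs_nonneg (5 - μ 0), abs_nonneg (5 - μ 1)]
      have A2 : |5 - μ 0| * |5 - μ 1| * |5 - μ 2| < 7.62 := by
        nlinarith [abs_nonneg (5 - μ 2), mul_nonneg (abs_nonneg (5 - μ 0)) (abs_nonneg (5 - μ 1))]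
      have A3 : |5 - μ 0| * |5 - μ 1| * |5 - μ 2| * |5 - μ 3| < 7.62 ^ 2 := by
        nlinarith [abs_nonneg (5 - μ 3),
          mul_nonneg (mul_nonneg (abs_nonneg (5 - μ 0)) (abs_nonneg (5 - μ 1))) (abs_nonneg (5 - μ 2))]
      have A4 : |5 - μ 0| * |5 - μ 1| * |5 - μ 2| * |5 - μ 3| * |5 - μ 4| < 7.62 ^ 3 := by
        nlinarith [abs_nonneg (5 - μ 4),
          mul_nonneg (mul_nonneg (mul_nonneg (abs_nonneg (5 - μ 0)) (abs_nonneg (5 - μ 1)))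
            (abs_nonneg (5 - μ 2))) (abs_nonneg (5 - μ 3))]
      have he := heval 5
      have habs : |((5 - μ 0) * (5 - μ 1) * (5 - μ 2) * (5 - μ 3) * (5 - μ 4))| =
          |5 - μ 0| * |5 - μ 1| * |5 - μ 2| * |5 - μ 3| * |5 - μ 4| := by
        rw [abs_mul, abs_mul, abs_mul, abs_mul]
      rw [he] at habs
      have : |(5:ℝ)^5 - 19*5^3 - 42*5^2 - 29*5 - 6| = 451 := by norm_num
      rw [this] at habs
      nlinarith [A4]
  exact ⟨by rw [h1eq, ha], h1big⟩
end

section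
/- For the graph T_3^k (k ≥ 1), the partition of its vertex set into {v}, {v_1,u_1,w_1}, {v_2,u_2,w_2}, and the set of k pendant vertices is equitable for D(G), and the corresponding quotient matrix Q has characteristic polynomial f(λ) = λ^4 - (2k+6)λ^3 - (9k+31)λ^2 - (10k+36)λ - 3k - 12. -/
open Polynomial

/-- The tricyclic graph `T₃ᵏ` on `k + 7` vertices: three triangles `0,1,2`, `0,3,4`,
`0,5,6` sharing the common vertex `0`, together with `k` pendant edges at `0`. -/
def T3 (k : ℕ) : SimpleGraph (Fin (k + 7)) :=
  SimpleGraph.fromRel (fun a b =>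
    (a = 0 ∧ b ≠ 0) ∨ (a.val, b.val) ∈ [(1, 2), (3, 4), (5, 6)])

def tri (x y : ℕ) : Prop := (x=1∧y=2)∨(x=2∧y=1)∨(x=3∧y=4)∨(x=4∧y=3)∨(x=5∧y=6)∨(x=6∧y=5)

instance (x y : ℕ) : Decidable (tri x y) := by unfold tri; infer_instance

lemma T3_adj {k : ℕ} (a b : Fin (k+7)) :
    (T3 k).Adj a b ↔ a.val ≠ b.val ∧ (a.val = 0 ∨ b.val = 0 ∨ tri a.val b.val) := by
  simp only [T3, SimpleGraph.fromRel_adj, List.mem_cons, List.not_mem_nil, or_false,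
    Prod.mk.injEq, Fin.ext_iff, Fin.val_zero, tri, List.mem_singleton, ne_eq]
  omega

lemma T3_dist {k : ℕ} (a b : Fin (k+7)) :
    (T3 k).dist a b = if a.val = b.val then 0
      else if (a.val = 0 ∨ b.val = 0 ∨ tri a.val b.val) then 1 else 2 := by
  split_ifs with h1 h2'
  · have : a = b := Fin.ext h1
    subst this; exact SimpleGraph.dist_self
  · exact SimpleGraph.dist_eq_one_iff_adj.mpr ((T3_adj a b).mpr ⟨h1, h2'⟩)
  · have h1' : a ≠ b := fun h => h1 (by rw [h])
    have h2 : ¬ (T3 k).Adj a b := fun h => h2' ((T3_adj a b).mp h).2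
    have ha : a.val ≠ 0 := by
      intro h0
      exact h2' (Or.inl h0)
    have hb : b.val ≠ 0 := by
      intro h0
      exact h2' (Or.inr (Or.inl h0))
    have hadj1 : (T3 k).Adj a 0 := (T3_adj a 0).mpr ⟨by simpa using ha, Or.inr (Or.inl rfl)⟩
    have hadj2 : (T3 k).Adj 0 b := (T3_adj 0 b).mpr ⟨by simpa using (Ne.symm hb), Or.inl rfl⟩
    let w : (T3 k).Walk a b := SimpleGraph.Walk.cons hadj1 (SimpleGraph.Walk.cons hadj2 SimpleGraph.Walk.nil)
    have hle : (T3 k).dist a b ≤ 2 := by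
      have h := SimpleGraph.dist_le w
      simpa [w] using h
    have hne0 : (T3 k).dist a b ≠ 0 :=
      SimpleGraph.dist_ne_zero_iff_ne_and_reachable.mpr ⟨h1', ⟨w⟩⟩
    have hne1 : (T3 k).dist a b ≠ 1 := fun h => h2 (SimpleGraph.dist_eq_one_iff_adj.mp h)
    omega

noncomputable def F (x y : ℕ) : ℝ :=
  if x = y then 0 else if (x = 0 ∨ y = 0 ∨ tri x y) then 1 else 2

def cls (x : ℕ) : Fin 4 :=
  if x = 0 then 0 else if x = 1 ∨ x = 3 ∨ x = 5 then 1
  else if x = 2 ∨ x = 4 ∨ x = 6 then 2 else 3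

lemma distMatrix_T3 {k : ℕ} (a b : Fin (k+7)) :
    distMatrix (T3 k) a b = F a.val b.val := by
  rw [distMatrix]; rw [T3_dist]; rw [F]
  split_ifs <;> norm_num

lemma cls_pend (n : ℕ) : cls (7 + n) = 3 := by
  unfold cls
  rw [if_neg (by omega), if_neg (by omega), if_neg (by omega)]

lemma F_zero_pend (n : ℕ) : F 0 (7 + n) = 1 := by
  unfold F
  rw [if_neg (by omega), if_pos (Or.inl rfl)]

lemma F_small_pend (m n : ℕ) (h1 : 1 ≤ m) (h2 : m ≤ 6) : F m (7 + n) = 2 := by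
  unfold F tri
  rw [if_neg (by omega), if_neg (by omega)]

lemma F_pend_small (m n : ℕ) (h1 : 7 ≤ m) (h2 : n ≤ 6) :
    F m n = if n = 0 then 1 else 2 := by
  unfold F tri
  rw [if_neg (by omega)]
  split_ifs <;> first | rfl | (exfalso; omega)

lemma F_pend_pend (m n : ℕ) (h1 : 7 ≤ m) : F m (7 + n) = if m = 7 + n then 0 else 2 := by
  unfold F tri
  split_ifs <;> first | rfl | (exfalso; omega)

lemma sum_pend_hole (k m : ℕ) (h7 : 7 ≤ m) (hmk : m < k + 7) :
    ∑ n ∈ Finset.range k, (if m = 7 + n then (0:ℝ) else 2) = 2 * k - 2 := by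
  have key : ∀ n ∈ Finset.range k,
      (if m = 7 + n then (0:ℝ) else 2) = 2 - (if (m - 7) = n then 2 else 0) := by
    intro n _
    split_ifs <;> try norm_num
    all_goals omega
  rw [Finset.sum_congr rfl key, Finset.sum_sub_distrib, Finset.sum_const,
    Finset.sum_ite_eq, if_pos (Finset.mem_range.mpr (by omega))]
  rw [Finset.card_range]
  push_cast
  ring


set_option maxHeartbeats 2000000 in
/-- The partition `{v}, {v₁,u₁,w₁}, {v₂,u₂,w₂}, {pendants}` is equitable for the
distance matrix of `T₃ᵏ`, with quotient matrix `Q`, and the characteristic polynomial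
of `Q` is `λ⁴ - (2k+6)λ³ - (9k+31)λ² - (10k+36)λ - 3k - 12`. -/
theorem stmt13 (k : ℕ) (hk : 1 ≤ k)
    (p : Fin (k + 7) → Fin 4)
    (hp : ∀ i, p i = if i.val = 0 then 0
      else if i.val = 1 ∨ i.val = 3 ∨ i.val = 5 then 1
      else if i.val = 2 ∨ i.val = 4 ∨ i.val = 6 then 2 else 3)
    (Q : Matrix (Fin 4) (Fin 4) ℝ)
    (hQ : Q = !![0, 3, 3, (k : ℝ);
                 1, 4, 5, 2 * (k : ℝ);
                 1, 5, 4, 2 * (k : ℝ);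
                 1, 6, 6, 2 * (k : ℝ) - 2]) :
    (∀ (i : Fin (k + 7)) (j : Fin 4),
        ∑ l ∈ Finset.univ.filter (fun l => p l = j), distMatrix (T3 k) i l = Q (p i) j) ∧
    Q.charpoly = X ^ 4 - C (2 * (k : ℝ) + 6) * X ^ 3 - C (9 * (k : ℝ) + 31) * X ^ 2
      - C (10 * (k : ℝ) + 36) * X - C (3 * (k : ℝ) + 12) := by
  subst hQ
  constructor
  · intro i j
    have hpc : ∀ l : Fin (k+7), p l = cls l.val := by
      intro l; rw [hp]; rfl
    simp only [hpc, distMatrix_T3]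
    rw [Finset.sum_filter]
    obtain ⟨m, hmlt⟩ := i
    rw [Fin.sum_univ_eq_sum_range (fun n => if cls n = j then F m n else 0)]
    rw [show Finset.range (k+7) = Finset.range (7+k) by rw [Nat.add_comm]]
    rw [Finset.sum_range_add]
    simp only [cls_pend]
    rcases Nat.lt_or_ge m 7 with h7 | h7
    · have h2sum : ∑ n ∈ Finset.range k, (if (3:Fin 4) = j then F m (7+n) else 0)
          = if (3:Fin 4) = j then (if m = 0 then (k:ℝ) else 2*k) else 0 := by
        split_ifs with hj hm
        · simp only [hm, F_zero_pend]
          rw [Finset.sum_const, Finset.card_range, nsmul_eq_mul, mul_one]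
        · have hc : ∀ n ∈ Finset.range k, F m (7+n) = 2 := fun n _ =>
            F_small_pend m n (by omega) (by omega)
          rw [Finset.sum_congr rfl hc, Finset.sum_const, Finset.card_range, nsmul_eq_mul]
          push_cast; ring
        · simp
      rw [h2sum]
      interval_cases m <;> fin_cases j <;>
        simp [Finset.sum_range_succ, cls, F, tri, Matrix.vecHead, Matrix.vecTail] <;> norm_num
    · have hclsm : cls m = 3 := by
        unfold cls; rw [if_neg (by omega), if_neg (by omega), if_neg (by omega)]
      rw [hclsm]
      have h2sum : ∑ n ∈ Finset.range k, (if (3:Fin 4) = j then F m (7+n) else 0)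
          = if (3:Fin 4) = j then 2*(k:ℝ) - 2 else 0 := by
        split_ifs with hj
        · have hc : ∀ n ∈ Finset.range k, F m (7+n) = if m = 7 + n then (0:ℝ) else 2 :=
            fun n _ => F_pend_pend m n h7
          rw [Finset.sum_congr rfl hc, sum_pend_hole k m h7 hmlt]
        · simp
      rw [h2sum]
      have e0 : F m 0 = 1 := by rw [F_pend_small m 0 h7 (by norm_num)]; norm_num
      have e1 : F m 1 = 2 := by rw [F_pend_small m 1 h7 (by norm_num)]; norm_num
      have e2 : F m 2 = 2 := by rw [F_pend_small m 2 h7 (by norm_num)]; norm_num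
      have e3 : F m 3 = 2 := by rw [F_pend_small m 3 h7 (by norm_num)]; norm_num
      have e4 : F m 4 = 2 := by rw [F_pend_small m 4 h7 (by norm_num)]; norm_num
      have e5 : F m 5 = 2 := by rw [F_pend_small m 5 h7 (by norm_num)]; norm_num
      have e6 : F m 6 = 2 := by rw [F_pend_small m 6 h7 (by norm_num)]; norm_num
      fin_cases j <;>
        simp [Finset.sum_range_succ, cls, e0, e1, e2, e3, e4, e5, e6, Matrix.vecHead, Matrix.vecTail] <;> norm_num
  · rw [Matrix.charpoly]
    rw [Matrix.det_succ_row_zero]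
    simp only [Fin.sum_univ_succ, Fin.sum_univ_zero, Matrix.det_fin_three,
      Matrix.charmatrix_apply, Matrix.one_apply, Matrix.submatrix_apply, Fin.succ_zero_eq_one,
      Matrix.cons_val', Matrix.cons_val_zero, Matrix.cons_val_one, Matrix.head_cons,
      Matrix.head_fin_const, Matrix.empty_val', Matrix.cons_val_fin_one, Fin.succ_one_eq_two,
      Matrix.of_apply, Matrix.cons_val_succ, Fin.succAbove]
    norm_num [Fin.ext_iff, Fin.lt_def, Fin.succ, Fin.castSucc, Fin.castAdd, Fin.castLE,
      Matrix.vecHead, Matrix.vecTail, Matrix.diagonal, Matrix.cons_val_two, map_sub, map_add, map_mul, map_ofNat]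
    ring
end

section
/- For every integer k ≥ 0, the tricyclic graph T_3^k (three triangles sharing a common vertex v, with k pendant edges at v) satisfies λ_2(T_3^k) < -1/2, and more precisely -3/4 < λ_2(T_3^k) < -1/2 for k ≥ 1. -/
open Polynomial

/-!
Vertex `0` is adjacent to every other vertex, so `D = distMatrix (T3 k)` has entry `1` on edges
and `2` between distinct non-adjacent vertices; off the diagonal it depends only on the parts
`{0}, {1,2}, {3,4}, {5,6}` and `{7, …}` containing the two vertices. Hence `t • 1 - D` is a
diagonal matrix plus a matrix that is constant on blocks, and the matrix determinant lemma
reduces its determinant to a `5 × 5` one: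
`(t + 2) det (t • 1 - D) = (t + 1)³ (t + 3)² (t + 2)ᵏ φ(t)` with
`φ(t) = t³ - (2k + 7) t² - (7k + 24) t - (3k + 12)`.
The cubic `φ` changes sign on `(-3, -1)`, `(-3/4, -1/2)` and `(-1/2, 2k + 15)`, so exactly two
eigenvalues exceed `-1`: one above `-1/2` and `λ₂ ∈ (-3/4, -1/2)`.
-/

open Matrix Finset

theorem Matrix.det_diagonal_add_submatrix {ι κ K : Type*} [Fintype ι] [DecidableEq ι]
    [Fintype κ] [DecidableEq κ] [Field K] (c : ι → κ) (δ : κ → K) (hδ : ∀ a, δ a ≠ 0)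
    (B : Matrix κ κ K) :
    det (diagonal (δ ∘ c) + B.submatrix c c) * ∏ a, δ a =
      (∏ a, δ a ^ #{i | c i = a}) *
        det (diagonal δ + B * diagonal fun a => (#{i | c i = a} : K)) := by
  set F : Matrix ι κ K := of fun i a => if c i = a then 1 else 0
  set s : κ → K := fun a => (#{i | c i = a} : K)
  have hsub : B.submatrix c c = F * (B * Fᵀ) := by
    ext i j
    simp [F, Matrix.mul_apply]
  have hgram : Fᵀ * ((diagonal (δ ∘ c))⁻¹ * F) = diagonal fun a => s a / δ a := by
    have hinv : (diagonal (δ ∘ c))⁻¹ = diagonal fun i => (δ (c i))⁻¹ := by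
      refine inv_eq_left_inv ?_
      rw [diagonal_mul_diagonal, ← diagonal_one]
      exact congrArg diagonal (funext fun i => inv_mul_cancel₀ (hδ (c i)))
    ext a b
    rw [hinv, mul_apply, diagonal_apply]
    calc ∑ i, Fᵀ a i * (diagonal (fun i => (δ (c i))⁻¹) * F) i b
        = ∑ i with c i = a, if a = b then (δ a)⁻¹ else 0 := by
          rw [sum_filter]
          refine sum_congr rfl fun i _ => ?_
          simp only [diagonal_mul, transpose_apply, F, of_apply]
          split_ifs <;> simp_all
      _ = _ := by
          rw [sum_const, nsmul_eq_mul]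
          split_ifs <;> simp [s, div_eq_mul_inv]
  have hΔ : det (diagonal (δ ∘ c)) = ∏ a, δ a ^ #{i | c i = a} := by
    rw [det_diagonal, ← prod_fiberwise univ c]
    refine prod_congr rfl fun a _ => ?_
    rw [prod_congr rfl fun i hi => by rw [Function.comp_apply, (mem_filter.1 hi).2], prod_const]
  have hsmall :
      diagonal δ + B * diagonal s = (1 + B * diagonal fun a => s a / δ a) * diagonal δ := by
    rw [add_mul, one_mul, Matrix.mul_assoc, diagonal_mul_diagonal]
    congr 3
    ext a
    field_simp [hδ a]
  have hunit : IsUnit (det (diagonal (δ ∘ c))) := by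
    rw [hΔ]
    exact IsUnit.mk0 _ (prod_ne_zero_iff.2 fun a _ => pow_ne_zero _ (hδ a))
  rw [hsub, det_add_mul _ _ hunit, hΔ, hsmall, det_mul, det_diagonal]
  simp only [Matrix.mul_assoc, hgram]
  ring

theorem Polynomial.countP_roots_prod_X_sub_C {ι R : Type*} [Fintype ι] [CommRing R]
    [IsDomain R] (μ : ι → R) (P : R → Prop) [DecidablePred P] :
    (∏ i, (X - C (μ i))).roots.countP P = #{i | P (μ i)} := by
  rw [show ∏ i, (X - C (μ i)) = ((univ.val.map μ).map fun a => X - C a).prod by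
    rw [Multiset.map_map]; rfl, roots_multiset_prod_X_sub_C, Multiset.countP_map]
  rfl

theorem SimpleGraph.dist_eq_ite_of_forall_adj {V : Type*} {G : SimpleGraph V} [DecidableEq V]
    [DecidableRel G.Adj] {c : V} (hc : ∀ v, v ≠ c → G.Adj c v) (u v : V) :
    G.dist u v = if u = v then 0 else if G.Adj u v then 1 else 2 := by
  split_ifs with huv hadj
  · rw [huv, dist_self]
  · exact dist_eq_one_iff_adj.2 hadj
  · have hu : u ≠ c := by rintro rfl; exact hadj (hc v (Ne.symm huv))
    have hv : v ≠ c := by rintro rfl; exact hadj (hc u huv).symm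
    have hcommon : c ∈ G.commonNeighbors u v := ⟨(hc u hu).symm, (hc v hv).symm⟩
    rw [SimpleGraph.dist, edist_eq_two_iff.2 ⟨huv, hadj, c, hcommon⟩]
    rfl

theorem Antitone.apply_one_lt_of_card_le_one {α : Type*} [LinearOrder α] {n : ℕ}
    {μ : Fin (n + 2) → α} (hμ : Antitone μ) {c : α} (h : #{i | c ≤ μ i} ≤ 1) : μ 1 < c := by
  by_contra! h1
  have hsub : {0, 1} ⊆ ({i | c ≤ μ i} : Finset (Fin (n + 2))) := by
    intro i hi
    simp only [mem_insert, mem_singleton] at hi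
    rcases hi with rfl | rfl
    · simpa using h1.trans (hμ (Fin.zero_le 1))
    · simpa using h1
  have := card_le_card hsub
  rw [card_pair (by simp)] at this
  omega

theorem Antitone.lt_apply_one_of_one_lt_card {α : Type*} [LinearOrder α] {n : ℕ}
    {μ : Fin (n + 2) → α} (hμ : Antitone μ) {c : α} (h : 1 < #{i | c < μ i}) : c < μ 1 := by
  by_contra! h1
  have hsub : ({i | c < μ i} : Finset (Fin (n + 2))) ⊆ {0} := by
    intro i hi
    simp only [mem_filter, mem_univ, true_and] at hi
    by_contra hi0
    exact (hμ (Fin.one_le_of_ne_zero (by simpa using hi0))).not_gt (h1.trans_lt hi)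
  have := card_le_card hsub
  simp at this
  omega

namespace T3

variable {k : ℕ}

-- `{0} ↦ 0`, `{1, 2} ↦ 1`, `{3, 4} ↦ 2`, `{5, 6} ↦ 3`, pendant vertices `↦ 4`
def part (i : Fin (k + 7)) : Fin 5 := ⟨min ((i.val + 1) / 2) 4, by omega⟩

def partDist : Matrix (Fin 5) (Fin 5) ℝ := fun a b =>
  if a = 0 ∨ b = 0 ∨ (a = b ∧ a ≠ 4) then 1 else 2

theorem adj_iff {i j : Fin (k + 7)} :
    (T3 k).Adj i j ↔ i ≠ j ∧ (part i = 0 ∨ part j = 0 ∨ (part i = part j ∧ part i ≠ 4)) := by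
  simp only [T3, SimpleGraph.fromRel_adj, List.mem_cons, List.mem_nil_iff, Prod.mk.injEq,
    or_false, ne_eq, Fin.ext_iff, part, Fin.val_zero, show ((4 : Fin 5) : ℕ) = 4 from rfl]
  omega

theorem part_eq_zero {v : Fin (k + 7)} : part v = 0 ↔ v = 0 := by
  simp only [part, Fin.ext_iff, Fin.val_zero]
  omega

theorem distMatrix_apply (i j : Fin (k + 7)) :
    distMatrix (T3 k) i j = if i = j then 0 else partDist (part i) (part j) := by
  classical
  have hub : ∀ v, v ≠ 0 → (T3 k).Adj 0 v := fun v hv =>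
    adj_iff.2 ⟨Ne.symm hv, Or.inl (part_eq_zero.2 rfl)⟩
  rw [distMatrix, SimpleGraph.dist_eq_ite_of_forall_adj hub, adj_iff]
  by_cases hij : i = j
  · simp [hij]
  · simp only [hij, partDist, if_false, ne_eq, not_false_eq_true, true_and]
    split_ifs <;> simp

theorem card_filter_part (a : Fin 5) : #{i : Fin (k + 7) | part i = a} = ![1, 2, 2, 2, k] a := by
  let p : ℕ → ℕ := fun n => if min ((n + 1) / 2) 4 = a.val then 1 else 0
  have hpend : ∀ x, p (7 + x) = if a = 4 then 1 else 0 := fun x => by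
    simp only [p, Fin.ext_iff]
    congr 1
    simp only [show ((4 : Fin 5) : ℕ) = 4 from rfl, eq_iff_iff]
    omega
  calc #{i : Fin (k + 7) | part i = a} = ∑ i : Fin (k + 7), p i := by
        simp only [card_filter, part, Fin.ext_iff, p]
    _ = ∑ n ∈ range 7, p n + k * if a = 4 then 1 else 0 := by
        rw [Fin.sum_univ_eq_sum_range p, add_comm k, sum_range_add]
        simp [hpend]
    _ = ![1, 2, 2, 2, k] a := by
        fin_cases a <;> simp [p, sum_range_succ, -sum_boole]

noncomputable def cubic (k : ℕ) : ℝ[X] :=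
  X ^ 3 - C (2 * (k : ℝ) + 7) * X ^ 2 - C (7 * (k : ℝ) + 24) * X - C (3 * (k : ℝ) + 12)

theorem eval_cubic (t : ℝ) :
    (cubic k).eval t = t ^ 3 - (2 * k + 7) * t ^ 2 - (7 * k + 24) * t - (3 * k + 12) := by
  simp [cubic]

theorem det_quotient (t : ℝ) :
    det (diagonal (fun a => t + partDist a a) +
        -partDist * diagonal fun a => (![1, 2, 2, 2, k] a : ℝ)) =
      (t + 3) ^ 2 * (cubic k).eval t := by
  have h : diagonal (fun a => t + partDist a a) +
      -partDist * diagonal (fun a => (![1, 2, 2, 2, k] a : ℝ)) =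
      !![t, -2, -2, -2, -k; -1, t-1, -4, -4, -2*k; -1, -4, t-1, -4, -2*k;
        -1, -4, -4, t-1, -2*k; -1, -4, -4, -4, t+2-2*k] := by
    ext a b
    fin_cases a <;> fin_cases b <;> simp [partDist] <;> ring
  rw [h, eval_cubic]
  simp [det_succ_row_zero, Fin.sum_univ_succ, Fin.succAbove]
  ring

theorem scalar_sub_distMatrix (t : ℝ) : scalar _ t - distMatrix (T3 k) =
    diagonal ((fun a => t + partDist a a) ∘ part) + (-partDist).submatrix part part := by
  ext i j
  rw [Matrix.sub_apply, distMatrix_apply, Matrix.add_apply, diagonal_apply, scalar_apply,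
    diagonal_apply]
  split_ifs with hij
  · subst hij; simp
  · simp

theorem det_scalar_sub_distMatrix {t : ℝ} (ht : 0 ≤ t) :
    (t + 2) * det (scalar _ t - distMatrix (T3 k)) =
      (t + 1) ^ 3 * (t + 3) ^ 2 * (t + 2) ^ k * (cubic k).eval t := by
  have hδ : ∀ a, t + partDist a a ≠ 0 := fun a => by
    have : 0 < partDist a a := by unfold partDist; split_ifs <;> norm_num
    positivity
  have hprod : ∏ a, (t + partDist a a) = (t + 1) ^ 4 * (t + 2) := by
    simp +decide only [Fin.prod_univ_five, partDist, if_true, if_false]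
    ring
  have hprod_pow :
      ∏ a, (t + partDist a a) ^ (![1, 2, 2, 2, k] a) = (t + 1) ^ 7 * (t + 2) ^ k := by
    simp +decide only [Fin.prod_univ_five, partDist, if_true, if_false, Matrix.cons_val]
    ring
  have key := det_diagonal_add_submatrix (part (k := k)) _ hδ (-partDist)
  simp only [card_filter_part, det_quotient, hprod, hprod_pow] at key
  rw [scalar_sub_distMatrix]
  have h1 : (t + 1) ^ 4 ≠ 0 := by positivity
  apply mul_left_cancel₀ h1
  linear_combination key

theorem charpoly_distMatrix :
    (X + C 2) * (distMatrix (T3 k)).charpoly =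
      (X + C 1) ^ 3 * (X + C 3) ^ 2 * (X + C 2) ^ k * cubic k := by
  refine eq_of_infinite_eval_eq _ _ ((Set.Ici_infinite 0).mono fun t ht => ?_)
  simp only [Set.mem_ofPred_eq, eval_mul, eval_pow, eval_add, eval_X, eval_C, eval_charpoly]
  exact det_scalar_sub_distMatrix ht

theorem exists_roots_cubic : ∃ s₁ s₂ s₃ : ℝ, -1 / 2 < s₁ ∧ -3 / 4 < s₂ ∧ s₂ < -1 / 2 ∧ s₃ < -1 ∧
    (cubic k).roots = {s₁, s₂, s₃} := by
  have hk : (0 : ℝ) ≤ k := k.cast_nonneg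
  have hcont : ∀ a b : ℝ, ContinuousOn (fun x => (cubic k).eval x) (Set.Icc a b) :=
    fun a b => (cubic k).continuousOn
  obtain ⟨s₁, ⟨h₁, h₁'⟩, hs₁⟩ :=
    intermediate_value_Ioo (by linarith) (hcont (-1 / 2) (2 * k + 15))
    (show (0 : ℝ) ∈ Set.Ioo _ _ by simp only [eval_cubic]; constructor <;> nlinarith)
  obtain ⟨s₂, ⟨h₂, h₂'⟩, hs₂⟩ :=
    intermediate_value_Ioo' (by norm_num) (hcont (-3 / 4) (-1 / 2))
    (show (0 : ℝ) ∈ Set.Ioo _ _ by simp only [eval_cubic]; constructor <;> nlinarith)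
  obtain ⟨s₃, ⟨h₃, h₃'⟩, hs₃⟩ := intermediate_value_Ioo (by norm_num) (hcont (-3) (-1))
    (show (0 : ℝ) ∈ Set.Ioo _ _ by simp only [eval_cubic]; constructor <;> nlinarith)
  have h₁₂ : s₁ ≠ s₂ := by intro h; linarith
  have h₁₃ : s₁ ≠ s₃ := by intro h; linarith
  have h₂₃ : s₂ ≠ s₃ := by intro h; linarith
  refine ⟨s₁, s₂, s₃, h₁, h₂, h₂', h₃', ?_⟩
  have hval : ({s₁, s₂, s₃} : Finset ℝ).val = {s₁, s₂, s₃} := by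
    simp [Multiset.ndinsert_of_notMem, h₁₂, h₁₃, h₂₃]
  rw [← hval]
  refine roots_eq_of_natDegree_le_card_of_ne_zero ?_ ?_ ?_
  · simp only [Finset.mem_insert, Finset.mem_singleton]
    rintro x (rfl | rfl | rfl) <;> assumption
  · rw [card_insert_of_notMem (by simp [h₁₂, h₁₃]), card_pair h₂₃, cubic]
    compute_degree
  · intro h
    have := congrArg (eval (-1 / 2)) h
    rw [eval_cubic, eval_zero] at this
    nlinarith

theorem exists_filter_roots_charpoly : ∃ s₁ s₂ : ℝ, -1 / 2 < s₁ ∧ -3 / 4 < s₂ ∧ s₂ < -1 / 2 ∧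
    (distMatrix (T3 k)).charpoly.roots.filter (-1 < ·) = {s₁, s₂} := by
  obtain ⟨s₁, s₂, s₃, h₁, h₂, h₂', h₃, hroots⟩ := exists_roots_cubic (k := k)
  refine ⟨s₁, s₂, h₁, h₂, h₂', ?_⟩
  have hcharpoly : (distMatrix (T3 k)).charpoly ≠ 0 := (charpoly_monic _).ne_zero
  have hcubic : cubic k ≠ 0 := fun h0 => by simp [h0] at hroots
  have h := congrArg (fun p => p.roots.filter (-1 < ·)) (charpoly_distMatrix (k := k))
  simp only [roots_mul, ne_eq, mul_eq_zero, pow_eq_zero_iff', X_add_C_ne_zero, hcharpoly, hcubic,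
    false_and, or_self, not_false_eq_true, roots_pow, roots_X_add_C, hroots] at h
  have hs₁ : -1 < s₁ := by linarith
  have hs₂ : -1 < s₂ := by linarith
  have hpend : (Multiset.replicate k (-2 : ℝ)).filter (-1 < ·) = 0 :=
    Multiset.filter_eq_nil.2 fun x hx => by rw [Multiset.eq_of_mem_replicate hx]; norm_num
  simpa [Multiset.filter_add, Multiset.filter_singleton, Multiset.nsmul_singleton,
    Multiset.filter_cons, hs₁, hs₂, h₃.not_gt, hpend] using h

end T3

/-- For every `k ≥ 0`, the second largest distance eigenvalue of `T₃ᵏ` is less than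
`-1/2`; moreover for `k ≥ 1` it lies in `(-3/4, -1/2)`. -/
theorem stmt15 (k : ℕ) (μ : Fin (k + 7) → ℝ) (hμ : Antitone μ)
    (hchar : (distMatrix (T3 k)).charpoly = ∏ i, (X - C (μ i))) :
    μ 1 < -1/2 ∧ (1 ≤ k → -3/4 < μ 1) := by
  obtain ⟨s₁, s₂, h₁, h₂, h₂', hroots⟩ := T3.exists_filter_roots_charpoly (k := k)
  have hcount : ∀ (P : ℝ → Prop) [DecidablePred P], (∀ x, P x → -1 < x) →
      #{i | P (μ i)} = ({s₁, s₂} : Multiset ℝ).countP P := by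
    intro P _ hP
    rw [← countP_roots_prod_X_sub_C, ← hchar, ← hroots, Multiset.countP_filter]
    exact Multiset.countP_congr rfl fun x _ => propext ⟨fun h => ⟨h, hP x h⟩, And.left⟩
  refine ⟨hμ.apply_one_lt_of_card_le_one ?_, fun _ => hμ.lt_apply_one_of_one_lt_card ?_⟩
  · rw [hcount _ fun x hx => by linarith]
    simp [Multiset.countP_eq_zero, h₁.le, h₂']
  · rw [hcount _ fun x hx => by linarith]
    simp [Multiset.countP_pos, h₂, (by linarith : (-3 / 4 : ℝ) < s₁)]
end

section
/- For the graph T_4^t (t ≥ 1), the quotient matrix Q = [[0,2,2,1,t],[1,1,4,2,2t],[1,4,2,1,2t],[1,4,2,0,2t],[1,4,4,2,2t-2]] of the distance matrix with respect to the equitable partition {v}, {v_1,v_2}, {u_1,u_3}, {u_2}, {pendant vertices} has characteristic polynomial f(λ) = λ^5 - (2t+1)λ^4 - (15t+35)λ^3 - (35t+91)λ^2 - (26t+76)λ - 6t - 20. -/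
/-!
Vertex `0` of `T₄ᵗ` is adjacent to every other vertex, so any two distinct non-adjacent
vertices are at distance `2`; hence the distance between two vertices is `0`, `1` or `2`
and is read off their labels. A row sum of the distance matrix over a class of the
partition splits into a sum over the six core vertices, a finite check, and a sum over
the `t` pendant vertices, which all look alike from any vertex. The characteristic
polynomial of the quotient matrix follows by cofactor expansion.
-/

open Polynomial

/-- The tricyclic graph `T₄ᵗ` on `t + 6` vertices: triangles `0,1,2`, `0,3,4`, `0,4,5`
(the last two sharing the edge `{0,4}`), with `t` pendant edges at `0`. -/
def T4 (t : ℕ) : SimpleGraph (Fin (t + 6)) :=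
  SimpleGraph.fromRel (fun a b =>
    (a = 0 ∧ b ≠ 0) ∨ (a.val, b.val) ∈ [(1, 2), (3, 4), (4, 5)])

open Finset

theorem SimpleGraph.dist_eq_two_of_forall_adj {V : Type*} {G : SimpleGraph V} {c x y : V}
    (hc : ∀ v, v ≠ c → G.Adj c v) (hne : x ≠ y) (hxy : ¬ G.Adj x y) : G.dist x y = 2 := by
  have hx : x ≠ c := by rintro rfl; exact hxy (hc y hne.symm)
  have hy : y ≠ c := by rintro rfl; exact hxy (hc x hne).symm
  have h : G.edist x y = 2 :=
    edist_eq_two_iff.mpr ⟨hne, hxy, c, (hc x hx).symm, (hc y hy).symm⟩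
  simp [SimpleGraph.dist, h]

def t4Dist (a b : ℕ) : ℕ :=
  if a = b then 0
  else if a = 0 ∨ b = 0 ∨ (a, b) ∈ [(1, 2), (3, 4), (4, 5)] ∨ (b, a) ∈ [(1, 2), (3, 4), (4, 5)]
  then 1 else 2

def t4Class (n : ℕ) : Fin 5 :=
  if n = 0 then 0 else if n = 1 ∨ n = 2 then 1 else if n = 3 ∨ n = 5 then 2
  else if n = 4 then 3 else 4

def t4Quot (s : ℝ) : Matrix (Fin 5) (Fin 5) ℝ :=
  !![0, 2, 2, 1, s;
     1, 1, 4, 2, 2 * s;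
     1, 4, 2, 1, 2 * s;
     1, 4, 2, 0, 2 * s;
     1, 4, 4, 2, 2 * s - 2]

theorem T4_adj_iff {t : ℕ} {x y : Fin (t + 6)} : (T4 t).Adj x y ↔ x.val ≠ y.val ∧
    (x.val = 0 ∨ y.val = 0 ∨ (x.val, y.val) ∈ [(1, 2), (3, 4), (4, 5)] ∨
      (y.val, x.val) ∈ [(1, 2), (3, 4), (4, 5)]) := by
  simp only [T4, SimpleGraph.fromRel_adj, ne_eq, Fin.ext_iff, Fin.val_zero]
  grind

theorem T4_dist_eq {t : ℕ} (x y : Fin (t + 6)) : (T4 t).dist x y = t4Dist x.val y.val := by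
  unfold t4Dist
  split_ifs with hxy hadj
  · simp [Fin.ext hxy]
  · exact SimpleGraph.dist_eq_one_iff_adj.mpr (T4_adj_iff.mpr ⟨hxy, hadj⟩)
  · refine SimpleGraph.dist_eq_two_of_forall_adj (c := 0) (fun v hv => ?_) (Fin.ne_of_val_ne hxy)
      (fun h => hadj (T4_adj_iff.mp h).2)
    exact T4_adj_iff.mpr ⟨Fin.val_ne_of_ne hv.symm, Or.inl (Fin.val_zero _)⟩

theorem t4Dist_comm (a b : ℕ) : t4Dist a b = t4Dist b a := by
  unfold t4Dist
  grind

theorem t4Dist_of_six_le {a b : ℕ} (hb : 6 ≤ b) :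
    t4Dist a b = if a = b then 0 else if a = 0 then 1 else 2 := by
  unfold t4Dist
  split_ifs <;> simp_all
  omega

theorem sum_range_t4Dist_pendant {t a : ℕ} (ha : a < t + 6) :
    ∑ x ∈ range t, (t4Dist a (6 + x) : ℝ) =
      if a = 0 then (t : ℝ) else if a < 6 then 2 * t else 2 * t - 2 := by
  have hpend (x : ℕ) : t4Dist a (6 + x) = if a = 6 + x then 0 else if a = 0 then 1 else 2 :=
    t4Dist_of_six_le (Nat.le_add_right 6 x)
  split_ifs with h0 h6
  · subst h0
    simp [hpend, show ∀ x, 0 ≠ 6 + x by omega]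
  · simp [hpend, h0, show ∀ x, a ≠ 6 + x by omega]
    ring
  · have hterm (x : ℕ) : (t4Dist a (6 + x) : ℝ) = 2 - if a - 6 = x then 2 else 0 := by
      rw [hpend]
      split_ifs <;> first | omega | norm_num
    simp [hterm, sum_sub_distrib, mem_range.mpr (by omega : a - 6 < t)]
    ring

theorem sum_filter_t4Class_distMatrix_T4_eq (t : ℕ) (i : Fin (t + 6)) (j : Fin 5) :
    ∑ l ∈ univ.filter (fun l => t4Class l.val = j), distMatrix (T4 t) i l
      = ∑ n ∈ range 6, (if t4Class n = j then (t4Dist i n : ℝ) else 0)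
        + if j = 4 then ∑ x ∈ range t, (t4Dist i (6 + x) : ℝ) else 0 := by
  have hpendant (x : ℕ) : t4Class (6 + x) = 4 := by
    unfold t4Class
    split_ifs <;> omega
  rw [sum_filter]
  simp only [distMatrix, T4_dist_eq]
  generalize (i : ℕ) = a
  rw [Fin.sum_univ_eq_sum_range (fun n => if t4Class n = j then (t4Dist a n : ℝ) else 0),
    add_comm t 6, sum_range_add]
  simp only [hpendant, eq_comm (a := (4 : Fin 5)), sum_ite_irrel, sum_const_zero]

theorem sum_filter_t4Class_distMatrix_T4 (t : ℕ) (i : Fin (t + 6)) (j : Fin 5) :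
    ∑ l ∈ univ.filter (fun l => t4Class l.val = j), distMatrix (T4 t) i l
      = t4Quot t (t4Class i) j := by
  rw [sum_filter_t4Class_distMatrix_T4_eq, sum_range_t4Dist_pendant i.isLt]
  obtain ⟨a, -⟩ := i
  rcases Nat.lt_or_ge a 6 with h6 | h6
  · interval_cases a <;> fin_cases j <;> simp [sum_range_succ, t4Dist, t4Class, t4Quot]
      <;> norm_num
  · have hclass : t4Class a = 4 := by
      unfold t4Class
      split_ifs <;> omega
    have hcore (n : ℕ) (hn : n < 6) : t4Dist a n = if n = 0 then 1 else 2 := by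
      rw [t4Dist_comm, t4Dist_of_six_le h6, if_neg (by omega)]
    rw [hclass]
    fin_cases j <;> simp [sum_range_succ, hcore, t4Class, t4Quot, h6.not_gt, show a ≠ 0 by omega]
      <;> norm_num

theorem charpoly_t4Quot (s : ℝ) :
    (t4Quot s).charpoly = X ^ 5 - C (2 * s + 1) * X ^ 4 - C (15 * s + 35) * X ^ 3
      - C (35 * s + 91) * X ^ 2 - C (26 * s + 76) * X - C (6 * s + 20) := by
  have hc : (t4Quot s).charmatrix =
      !![X, -2, -2, -1, -C s;
         -1, X - 1, -4, -2, -(2 * C s);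
         -1, -4, X - 2, -1, -(2 * C s);
         -1, -4, -2, X, -(2 * C s);
         -1, -4, -4, -2, X - (2 * C s - 2)] := by
    refine Matrix.ext fun i j => ?_
    fin_cases i <;> fin_cases j <;> simp [t4Quot, map_ofNat]
  rw [Matrix.charpoly, hc]
  simp [Fin.sum_univ_succ, Matrix.det_succ_row_zero, Fin.succAbove, map_ofNat]
  ring

theorem stmt17_general (t : ℕ)
    (p : Fin (t + 6) → Fin 5)
    (hp : ∀ i, p i = if i.val = 0 then 0
      else if i.val = 1 ∨ i.val = 2 then 1
      else if i.val = 3 ∨ i.val = 5 then 2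
      else if i.val = 4 then 3 else 4)
    (Q : Matrix (Fin 5) (Fin 5) ℝ)
    (hQ : Q = !![0, 2, 2, 1, (t : ℝ);
                 1, 1, 4, 2, 2 * (t : ℝ);
                 1, 4, 2, 1, 2 * (t : ℝ);
                 1, 4, 2, 0, 2 * (t : ℝ);
                 1, 4, 4, 2, 2 * (t : ℝ) - 2]) :
    (∀ (i : Fin (t + 6)) (j : Fin 5),
        ∑ l ∈ Finset.univ.filter (fun l => p l = j), distMatrix (T4 t) i l = Q (p i) j) ∧
    Q.charpoly = X ^ 5 - C (2 * (t : ℝ) + 1) * X ^ 4 - C (15 * (t : ℝ) + 35) * X ^ 3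
      - C (35 * (t : ℝ) + 91) * X ^ 2 - C (26 * (t : ℝ) + 76) * X
      - C (6 * (t : ℝ) + 20) := by
  obtain rfl : p = fun i => t4Class i.val := funext hp
  subst hQ
  exact ⟨sum_filter_t4Class_distMatrix_T4 t, charpoly_t4Quot t⟩

/-- The partition `{v}, {v₁,v₂}, {u₁,u₃}, {u₂}, {pendants}` is equitable for the
distance matrix of `T₄ᵗ` with quotient matrix `Q`, whose characteristic polynomial is
`λ⁵ - (2t+1)λ⁴ - (15t+35)λ³ - (35t+91)λ² - (26t+76)λ - 6t - 20`. -/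
theorem stmt17 (t : ℕ) (ht : 1 ≤ t)
    (p : Fin (t + 6) → Fin 5)
    (hp : ∀ i, p i = if i.val = 0 then 0
      else if i.val = 1 ∨ i.val = 2 then 1
      else if i.val = 3 ∨ i.val = 5 then 2
      else if i.val = 4 then 3 else 4)
    (Q : Matrix (Fin 5) (Fin 5) ℝ)
    (hQ : Q = !![0, 2, 2, 1, (t : ℝ);
                 1, 1, 4, 2, 2 * (t : ℝ);
                 1, 4, 2, 1, 2 * (t : ℝ);
                 1, 4, 2, 0, 2 * (t : ℝ);
                 1, 4, 4, 2, 2 * (t : ℝ) - 2]) :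
    (∀ (i : Fin (t + 6)) (j : Fin 5),
        ∑ l ∈ Finset.univ.filter (fun l => p l = j), distMatrix (T4 t) i l = Q (p i) j) ∧
    Q.charpoly = X ^ 5 - C (2 * (t : ℝ) + 1) * X ^ 4 - C (15 * (t : ℝ) + 35) * X ^ 3
      - C (35 * (t : ℝ) + 91) * X ^ 2 - C (26 * (t : ℝ) + 76) * X
      - C (6 * (t : ℝ) + 20) :=
  stmt17_general t p hp Q hQ
end
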